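/- arXiv:2210.11008 — 3 statements merged into one kernel-verified Lean document; each statement's English description precedes it below -/
import Mathlib

section
/- Let Ω be a locally compact Hausdorff space with countable base, 0 < q < 1, σ a locally finite Radon measure on Ω, and G a kernel on Ω satisfying the weak maximum principle with constant 𝔟. Then there exists a positive constant C₁ = C₁(q,𝔟) such that C₁ ‖Gσ‖_{L^{q/(1−q)}(Ω,σ)} ≤ ϰ, where ϰ is the least constant C in the inequality ‖Gν‖_{L^q(Ω,σ)} ≤ C‖ν‖ over all finite Radon measures ν on Ω. -/
open MeasureTheory ENNReal Set

noncomputable section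

namespace NPE

variable {Ω : Type*} [TopologicalSpace Ω] [MeasurableSpace Ω]

/-- The potential `Gμ(x) = ∫_Ω G(x,y) dμ(y)`. -/
def pot (G : Ω → Ω → ℝ≥0∞) (μ : Measure Ω) (x : Ω) : ℝ≥0∞ :=
  ∫⁻ y, G x y ∂μ

/-- The potential `G(f dσ)(x) = ∫_Ω G(x,y) f(y) dσ(y)`. -/
def potF (G : Ω → Ω → ℝ≥0∞) (σ : Measure Ω) (f : Ω → ℝ≥0∞) (x : Ω) : ℝ≥0∞ :=
  ∫⁻ y, G x y * f y ∂σ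

/-- A kernel on `Ω` is a lower semicontinuous function `Ω × Ω → [0,∞]`. -/
def IsKernel (G : Ω → Ω → ℝ≥0∞) : Prop :=
  LowerSemicontinuous (fun p : Ω × Ω => G p.1 p.2)

/-- A quasi-metric kernel with quasi-metric constant `κ ≥ 1/2`: positive, symmetric and
`d := 1/G` satisfies the quasi-triangle inequality. -/
def IsQuasiMetricKernel (G : Ω → Ω → ℝ≥0∞) (κ : ℝ) : Prop :=
  IsKernel G ∧ (1 / 2 : ℝ) ≤ κ ∧ (∀ x y, 0 < G x y) ∧ (∀ x y, G x y = G y x) ∧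
    ∀ x y z, (G x y)⁻¹ ≤ ENNReal.ofReal κ * ((G x z)⁻¹ + (G z y)⁻¹)

/-- The closed support of a measure. -/
def msupp (μ : Measure Ω) : Set Ω :=
  {x | ∀ U : Set Ω, IsOpen U → x ∈ U → 0 < μ U}

/-- The weak maximum principle with constant `b ≥ 1`. -/
def WMP (G : Ω → Ω → ℝ≥0∞) (b : ℝ) : Prop :=
  1 ≤ b ∧ ∀ μ : Measure Ω, IsLocallyFiniteMeasure μ →
    (∀ x ∈ msupp μ, pot G μ x ≤ 1) → ∀ x, pot G μ x ≤ ENNReal.ofReal b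

/-- Quasi-symmetry with constant `a ≥ 1`. -/
def QS (G : Ω → Ω → ℝ≥0∞) (a : ℝ) : Prop :=
  1 ≤ a ∧ ∀ x y, (ENNReal.ofReal a)⁻¹ * G y x ≤ G x y ∧ G x y ≤ ENNReal.ofReal a * G y x

/-- The `L^q` quasi-norm of a nonnegative function with respect to `σ`. -/
def lqNorm (q : ℝ) (σ : Measure Ω) (f : Ω → ℝ≥0∞) : ℝ≥0∞ :=
  (∫⁻ x, f x ^ q ∂σ) ^ (1 / q)

/-- The least constant `ϰ` in the `(1,q)` weighted norm inequality
`‖Gν‖_{L^q(σ)} ≤ C ‖ν‖` over all finite Radon measures `ν`. -/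
def kappa (G : Ω → Ω → ℝ≥0∞) (q : ℝ) (σ : Measure Ω) : ℝ≥0∞ :=
  sInf {C : ℝ≥0∞ | ∀ ν : Measure Ω, IsFiniteMeasure ν →
    lqNorm q σ (pot G ν) ≤ C * ν Set.univ}

/-- The ball `B(x,r) = {y : G(x,y) > 1/r}`, i.e. `{y : d(x,y) < r}` with `d = 1/G`. -/
def ball (G : Ω → Ω → ℝ≥0∞) (x : Ω) (r : ℝ) : Set Ω :=
  {y | (G x y)⁻¹ < ENNReal.ofReal r}

/-- The intrinsic nonlinear potential
`Kσ(x) = ∫_0^∞ ϰ(B(x,r))^{q/(1-q)} r⁻² dr`. -/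
def kpot (G : Ω → Ω → ℝ≥0∞) (q : ℝ) (σ : Measure Ω) (x : Ω) : ℝ≥0∞ :=
  ∫⁻ r in Set.Ioi (0 : ℝ),
    kappa G q (σ.restrict (ball G x r)) ^ (q / (1 - q)) / ENNReal.ofReal (r ^ 2)

/-- A nontrivial super-solution of `u = G(u^q dσ) + d`:
`u > 0` σ-a.e. and `G(u^q dσ) + d ≤ u < ∞` σ-a.e. -/
def IsSupSol (G : Ω → Ω → ℝ≥0∞) (σ : Measure Ω) (q : ℝ) (d : Ω → ℝ≥0∞)
    (u : Ω → ℝ≥0∞) : Prop :=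
  Measurable u ∧ (∀ᵐ x ∂σ, 0 < u x) ∧
    ∀ᵐ x ∂σ, potF G σ (fun y => u y ^ q) x + d x ≤ u x ∧ u x < ∞

/-- A sub-solution: `u ≤ G(u^q dσ) + d < ∞` σ-a.e. -/
def IsSubSol (G : Ω → Ω → ℝ≥0∞) (σ : Measure Ω) (q : ℝ) (d : Ω → ℝ≥0∞)
    (u : Ω → ℝ≥0∞) : Prop :=
  Measurable u ∧
    ∀ᵐ x ∂σ, u x ≤ potF G σ (fun y => u y ^ q) x + d x ∧
      potF G σ (fun y => u y ^ q) x + d x < ∞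

/-- A nontrivial solution: `u > 0` σ-a.e. and `u = G(u^q dσ) + d`, `u < ∞`, σ-a.e. -/
def IsSol (G : Ω → Ω → ℝ≥0∞) (σ : Measure Ω) (q : ℝ) (d : Ω → ℝ≥0∞)
    (u : Ω → ℝ≥0∞) : Prop :=
  Measurable u ∧ (∀ᵐ x ∂σ, 0 < u x) ∧
    ∀ᵐ x ∂σ, u x = potF G σ (fun y => u y ^ q) x + d x ∧ u x < ∞

/-- The growth conditions `∫_a^∞ σ(B(x₀,r)) r⁻² dr < ∞`,
`∫_a^∞ ϰ(B(x₀,r))^{q/(1-q)} r⁻² dr < ∞` and `∫_a^∞ μ(B(x₀,r)) r⁻² dr < ∞`. -/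
def growthConds (G : Ω → Ω → ℝ≥0∞) (q : ℝ) (σ μ : Measure Ω) (x₀ : Ω) (a : ℝ) : Prop :=
  (∫⁻ r in Set.Ioi a, σ (ball G x₀ r) / ENNReal.ofReal (r ^ 2)) < ∞ ∧
  (∫⁻ r in Set.Ioi a,
      kappa G q (σ.restrict (ball G x₀ r)) ^ (q / (1 - q)) / ENNReal.ofReal (r ^ 2)) < ∞ ∧
  (∫⁻ r in Set.Ioi a, μ (ball G x₀ r) / ENNReal.ofReal (r ^ 2)) < ∞

/-- The modified kernel `G̃(x,y) = G(x,y)/(m(x)m(y))`. -/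
def modKer (G : Ω → Ω → ℝ≥0∞) (m : Ω → ℝ) : Ω → Ω → ℝ≥0∞ :=
  fun x y => G x y / (ENNReal.ofReal (m x) * ENNReal.ofReal (m y))

/-- The modified measure `dσ̃ = m^{1+q} dσ`. -/
def modMeas (σ : Measure Ω) (m : Ω → ℝ) (q : ℝ) : Measure Ω :=
  σ.withDensity fun x => ENNReal.ofReal (m x) ^ ((1 : ℝ) + q)

/-!
Truncate: let `μ` be `σ` restricted to a set of finite measure, `m = min (Gμ) N` and test the
`(1, q)` inequality with `ν = m^γ μ`, `γ = q/(1-q)`. The weak maximum principle, applied to `μ`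
restricted to the closed sublevel set `{Gμ ≤ t}` with `t = m(x)/(2𝔟)`, shows that at least half
of `Gμ(x)` comes from `{Gμ > t}`, where `m ≥ t`; hence `Gν ≥ c m^{1+γ}` with `c = c(q, 𝔟)`.
Integrating, `c ‖ν‖^{1/q} ≤ ‖Gν‖_{L^q(σ)} ≤ ϰ ‖ν‖`, and since `1/q = 1/γ + 1` this is
`∫ m^γ dμ ≤ (ϰ/c)^γ`. Monotone convergence removes the truncation.
-/

open Filter Topology

/-- With `t = a/(2𝔟)` one has `t^γ · a/2 = wmpConst 𝔟 γ · a^(1+γ)`. -/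
def wmpConst (b γ : ℝ) : ℝ≥0∞ :=
  (2 * (2 * ENNReal.ofReal b) ^ γ)⁻¹

theorem wmpConst_ne_zero {b γ : ℝ} (hγ : 0 ≤ γ) : wmpConst b γ ≠ 0 :=
  ENNReal.inv_ne_zero.2 (ENNReal.mul_ne_top ENNReal.ofNat_ne_top (ENNReal.rpow_ne_top_of_nonneg hγ
    (ENNReal.mul_ne_top ENNReal.ofNat_ne_top ENNReal.ofReal_ne_top)))

theorem wmpConst_ne_top {b : ℝ} (hb : 0 < b) (γ : ℝ) : wmpConst b γ ≠ ∞ :=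
  ENNReal.inv_ne_top.2 (mul_ne_zero two_ne_zero (ENNReal.rpow_pos (by simp [hb])
    (ENNReal.mul_ne_top ENNReal.ofNat_ne_top ENNReal.ofReal_ne_top)).ne')

section Potential

variable {G : Ω → Ω → ℝ≥0∞}

omit [TopologicalSpace Ω] in
theorem pot_mono {μ μ' : Measure Ω} (h : μ ≤ μ') (x : Ω) : pot G μ x ≤ pot G μ' x :=
  lintegral_mono' h le_rfl

/-- Fatou's lemma along `𝓝 x`. -/
theorem lowerSemicontinuous_pot [FirstCountableTopology Ω] (hG : IsKernel G)
    (hGm : Measurable fun p : Ω × Ω => G p.1 p.2) (μ : Measure Ω) :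
    LowerSemicontinuous (pot G μ) :=
  lowerSemicontinuous_iff_le_liminf.2 fun x =>
    (lintegral_mono fun _ =>
      (LowerSemicontinuous.comp hG (continuous_id.prodMk continuous_const)).le_liminf x).trans
    (lintegral_liminf_le fun _ => hGm.comp measurable_prodMk_left)

theorem msupp_restrict_subset [OpensMeasurableSpace Ω] (μ : Measure Ω) {S : Set Ω}
    (hS : IsClosed S) : msupp (μ.restrict S) ⊆ S := by
  intro z hz
  by_contra hzS
  have hpos := hz Sᶜ hS.isOpen_compl hzS
  rw [Measure.restrict_apply hS.isOpen_compl.measurableSet, compl_inter_self,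
    measure_empty] at hpos
  exact lt_irrefl 0 hpos

theorem WMP.pot_le_mul {b : ℝ} (hW : WMP G b) {μ : Measure Ω} [IsLocallyFiniteMeasure μ]
    {t : ℝ≥0∞} (ht0 : t ≠ 0) (htop : t ≠ ∞) (h : ∀ x ∈ msupp μ, pot G μ x ≤ t) (x : Ω) :
    pot G μ x ≤ ENNReal.ofReal b * t := by
  lift t⁻¹ to NNReal using ENNReal.inv_ne_top.2 ht0 with c hc
  have hpot : ∀ z, pot G (c • μ) z = c * pot G μ z := fun z => by
    rw [pot, lintegral_smul_measure, ENNReal.smul_def, smul_eq_mul, pot]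
  have hsupp : ∀ z ∈ msupp (c • μ), pot G (c • μ) z ≤ 1 := by
    intro z hz
    have hzμ : z ∈ msupp μ := fun U hU hzU => pos_iff_ne_zero.2 fun h0 => by
      simpa [Measure.smul_apply, h0] using hz U hU hzU
    rw [hpot, hc, ← ENNReal.inv_mul_cancel ht0 htop]
    exact mul_le_mul_right (h z hzμ) _
  have hbound := hW.2 _ inferInstance hsupp x
  rw [hpot, hc] at hbound
  calc pot G μ x = t * (t⁻¹ * pot G μ x) := by
        rw [← mul_assoc, ENNReal.mul_inv_cancel ht0 htop, one_mul]
    _ ≤ t * ENNReal.ofReal b := mul_le_mul_right hbound t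
    _ = ENNReal.ofReal b * t := mul_comm _ _

variable [SecondCountableTopology Ω] [OpensMeasurableSpace Ω]

/-- The weak maximum principle applies to `μ` restricted to the closed sublevel set `{Gμ ≤ t}`. -/
theorem pot_le_add_pot_restrict_superlevel (hG : IsKernel G) {b : ℝ} (hW : WMP G b)
    (μ : Measure Ω) [IsLocallyFiniteMeasure μ] {t : ℝ≥0∞} (ht0 : t ≠ 0) (htop : t ≠ ∞)
    (x : Ω) :
    pot G μ x ≤ ENNReal.ofReal b * t + pot G (μ.restrict {y | t < pot G μ y}) x := by
  set S := pot G μ ⁻¹' Iic t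
  have hS : IsClosed S := (lowerSemicontinuous_pot hG hG.measurable μ).isClosed_preimage t
  have hSc : Sᶜ = {y | t < pot G μ y} := by ext y; simp [S]
  have hbound : pot G (μ.restrict S) x ≤ ENNReal.ofReal b * t :=
    hW.pot_le_mul ht0 htop (fun z hz => (pot_mono Measure.restrict_le_self z).trans
      (msupp_restrict_subset μ hS hz)) x
  rw [← hSc, pot, ← lintegral_add_compl _ hS.measurableSet]
  exact add_le_add_left hbound _

theorem half_le_pot_restrict_superlevel (hG : IsKernel G) {b : ℝ} (hW : WMP G b)
    (μ : Measure Ω) [IsLocallyFiniteMeasure μ] {a : ℝ≥0∞} {x : Ω} (ha0 : a ≠ 0)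
    (hatop : a ≠ ∞) (ha : a ≤ pot G μ x) :
    a / 2 ≤ pot G (μ.restrict {y | a / (2 * ENNReal.ofReal b) < pot G μ y}) x := by
  have h2b0 : 2 * ENNReal.ofReal b ≠ 0 := by simp [one_pos.trans_le hW.1]
  have hbt : ENNReal.ofReal b * (a / (2 * ENNReal.ofReal b)) = a / 2 := by
    rw [← mul_div_assoc, mul_comm 2,
      ENNReal.mul_div_mul_left _ _ (right_ne_zero_of_mul h2b0) ENNReal.ofReal_ne_top]
  have ht0 : a / (2 * ENNReal.ofReal b) ≠ 0 :=
    (ENNReal.div_pos ha0 (ENNReal.mul_ne_top ENNReal.ofNat_ne_top ENNReal.ofReal_ne_top)).ne'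
  have htop : a / (2 * ENNReal.ofReal b) ≠ ∞ := ENNReal.div_ne_top hatop h2b0
  refine (ENNReal.add_le_add_iff_left (ENNReal.div_ne_top hatop two_ne_zero)).1 ?_
  rw [ENNReal.add_halves, ← hbt]
  exact ha.trans (pot_le_add_pot_restrict_superlevel hG hW μ ht0 htop x)

theorem mul_rpow_le_pot_withDensity (hG : IsKernel G) {b : ℝ} (hW : WMP G b)
    (μ : Measure Ω) [IsLocallyFiniteMeasure μ] {N : ℝ≥0∞} (hN : N ≠ ∞) {γ : ℝ} (hγ : 0 ≤ γ)
    (x : Ω) :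
    wmpConst b γ * min (pot G μ x) N ^ (1 + γ) ≤
      pot G (μ.withDensity fun y => min (pot G μ y) N ^ γ) x := by
  set m : Ω → ℝ≥0∞ := fun y => min (pot G μ y) N
  change wmpConst b γ * m x ^ (1 + γ) ≤ pot G (μ.withDensity fun y => m y ^ γ) x
  rcases eq_or_ne (m x) 0 with h0 | h0
  · simp [h0, ENNReal.zero_rpow_of_pos (by positivity : (0 : ℝ) < 1 + γ)]
  have hmtop : m x ≠ ∞ := ne_top_of_le_ne_top hN (min_le_right _ _)
  have h2b1 : 1 ≤ 2 * ENNReal.ofReal b :=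
    one_le_two.trans (le_mul_of_one_le_right zero_le (ENNReal.one_le_ofReal.2 hW.1))
  set t := m x / (2 * ENNReal.ofReal b)
  set T := {y | t < pot G μ y}
  have htop : t ≠ ∞ := ENNReal.div_ne_top hmtop (zero_lt_one.trans_le h2b1).ne'
  have hT : MeasurableSet T :=
    ((lowerSemicontinuous_pot hG hG.measurable μ).isOpen_preimage t).measurableSet
  have hm : Measurable m :=
    (lowerSemicontinuous_pot hG hG.measurable μ).measurable.min measurable_const
  have ht_le : ∀ y ∈ T, t ≤ m y := fun y hy =>
    le_min hy.le ((ENNReal.div_le_of_le_mul (le_mul_of_one_le_right zero_le h2b1)).trans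
      (min_le_right _ _))
  have hhalf : m x / 2 ≤ ∫⁻ y in T, G x y ∂μ :=
    half_le_pot_restrict_superlevel hG hW μ h0 hmtop (min_le_left _ _)
  calc wmpConst b γ * m x ^ (1 + γ) = t ^ γ * (m x / 2) := by
        rw [wmpConst, ENNReal.div_rpow_of_nonneg _ _ hγ, add_comm 1 γ,
          ENNReal.rpow_add _ _ h0 hmtop, ENNReal.rpow_one, ENNReal.mul_inv (by simp) (by simp),
          div_eq_mul_inv, div_eq_mul_inv]
        ring
    _ ≤ t ^ γ * ∫⁻ y in T, G x y ∂μ := by gcongr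
    _ = ∫⁻ y in T, t ^ γ * G x y ∂μ :=
        (lintegral_const_mul' _ _ (ENNReal.rpow_ne_top_of_nonneg hγ htop)).symm
    _ ≤ ∫⁻ y in T, m y ^ γ * G x y ∂μ :=
        setLIntegral_mono' hT fun y hy => by gcongr; exact ht_le y hy
    _ ≤ ∫⁻ y, m y ^ γ * G x y ∂μ := setLIntegral_le_lintegral _ _
    _ = pot G (μ.withDensity fun y => m y ^ γ) x :=
        (lintegral_withDensity_eq_lintegral_mul _ (hm.pow_const γ)
          (hG.measurable.comp measurable_prodMk_left)).symm

end Potential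

theorem le_div_rpow_of_mul_rpow_add_one_le {c K V : ℝ≥0∞} {γ : ℝ} (hγ : 0 < γ) (hc0 : c ≠ 0)
    (hctop : c ≠ ∞) (hV : V ≠ ∞) (h : c * V ^ (1 / γ + 1) ≤ K * V) : V ≤ (K / c) ^ γ := by
  rcases eq_or_ne V 0 with rfl | h0
  · exact zero_le
  rw [ENNReal.rpow_add _ _ h0 hV, ENNReal.rpow_one, ← mul_assoc] at h
  have hroot : V ^ (1 / γ) ≤ K / c := by
    rw [ENNReal.le_div_iff_mul_le (Or.inl hc0) (Or.inl hctop), mul_comm]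
    exact (ENNReal.mul_le_mul_iff_left h0 hV).1 h
  calc V = (V ^ (1 / γ)) ^ γ := by
        rw [← ENNReal.rpow_mul, one_div_mul_cancel hγ.ne', ENNReal.rpow_one]
    _ ≤ (K / c) ^ γ := ENNReal.rpow_le_rpow hroot hγ.le

section Kappa

variable {G : Ω → Ω → ℝ≥0∞} {q : ℝ}

omit [TopologicalSpace Ω] in
theorem lqNorm_pot_le_kappa_mul (hq : 0 < q) (σ ν : Measure Ω) [IsFiniteMeasure ν] :
    lqNorm q σ (pot G ν) ≤ kappa G q σ * ν univ := by
  rcases eq_or_ne (ν univ) 0 with h0 | h0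
  · rw [Measure.measure_univ_eq_zero.1 h0]
    simp [lqNorm, pot, ENNReal.zero_rpow_of_pos hq, hq]
  have hdiv : lqNorm q σ (pot G ν) / ν univ ≤ kappa G q σ :=
    le_sInf fun C hC => ENNReal.div_le_of_le_mul (hC ν inferInstance)
  calc lqNorm q σ (pot G ν) = lqNorm q σ (pot G ν) / ν univ * ν univ :=
        (ENNReal.div_mul_cancel h0 (measure_ne_top ν univ)).symm
    _ ≤ kappa G q σ * ν univ := by gcongr

omit [TopologicalSpace Ω] in
theorem mul_lintegral_rpow_le_lqNorm {γ : ℝ} (hq : 0 < q) (hγq : (1 + γ) * q = γ)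
    {μ σ : Measure Ω} (hμσ : μ ≤ σ) {c : ℝ≥0∞} {f g : Ω → ℝ≥0∞} (hf : Measurable f)
    (h : ∀ x, c * f x ^ (1 + γ) ≤ g x) :
    c * (∫⁻ x, f x ^ γ ∂μ) ^ (1 / q) ≤ lqNorm q σ g := by
  have hint : c ^ q * ∫⁻ x, f x ^ γ ∂μ ≤ ∫⁻ x, g x ^ q ∂σ :=
    calc c ^ q * ∫⁻ x, f x ^ γ ∂μ = ∫⁻ x, (c * f x ^ (1 + γ)) ^ q ∂μ := by
          rw [← lintegral_const_mul _ (hf.pow_const γ)]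
          congr 1 with x
          rw [ENNReal.mul_rpow_of_nonneg _ _ hq.le, ← ENNReal.rpow_mul, hγq]
      _ ≤ ∫⁻ x, g x ^ q ∂μ := lintegral_mono fun x => ENNReal.rpow_le_rpow (h x) hq.le
      _ ≤ ∫⁻ x, g x ^ q ∂σ := lintegral_mono' hμσ le_rfl
  calc c * (∫⁻ x, f x ^ γ ∂μ) ^ (1 / q) = (c ^ q * ∫⁻ x, f x ^ γ ∂μ) ^ (1 / q) := by
        rw [ENNReal.mul_rpow_of_nonneg _ _ (by positivity), ← ENNReal.rpow_mul,
          mul_one_div_cancel hq.ne', ENNReal.rpow_one]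
    _ ≤ lqNorm q σ g := ENNReal.rpow_le_rpow hint (by positivity)

theorem lintegral_min_pot_rpow_le [SecondCountableTopology Ω] [OpensMeasurableSpace Ω]
    (hG : IsKernel G) {b : ℝ} (hW : WMP G b) (hq0 : 0 < q) (hq1 : q < 1)
    {σ μ : Measure Ω} [IsFiniteMeasure μ] (hμσ : μ ≤ σ) {N : ℝ≥0∞} (hN : N ≠ ∞) :
    ∫⁻ y, min (pot G μ y) N ^ (q / (1 - q)) ∂μ ≤
      (kappa G q σ / wmpConst b (q / (1 - q))) ^ (q / (1 - q)) := by
  set γ := q / (1 - q)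
  have hγ : 0 < γ := div_pos hq0 (sub_pos.2 hq1)
  set m : Ω → ℝ≥0∞ := fun y => min (pot G μ y) N
  set ν := μ.withDensity fun y => m y ^ γ
  have hm : Measurable m :=
    (lowerSemicontinuous_pot hG hG.measurable μ).measurable.min measurable_const
  have hν : ν univ = ∫⁻ y, m y ^ γ ∂μ := by
    rw [withDensity_apply _ MeasurableSet.univ, Measure.restrict_univ]
  have hVtop : ∫⁻ y, m y ^ γ ∂μ ≠ ∞ := by
    refine ne_top_of_le_ne_top ?_ (lintegral_mono fun y =>
      ENNReal.rpow_le_rpow (min_le_right (pot G μ y) N) hγ.le)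
    rw [lintegral_const]
    exact ENNReal.mul_ne_top (ENNReal.rpow_ne_top_of_nonneg hγ.le hN) (measure_ne_top μ univ)
  have : IsFiniteMeasure ν := ⟨hν ▸ hVtop.lt_top⟩
  have hq1' : 1 - q ≠ 0 := (sub_pos.2 hq1).ne'
  refine le_div_rpow_of_mul_rpow_add_one_le hγ (wmpConst_ne_zero hγ.le)
    (wmpConst_ne_top (one_pos.trans_le hW.1) γ) hVtop ?_
  calc wmpConst b γ * (∫⁻ y, m y ^ γ ∂μ) ^ (1 / γ + 1)
      = wmpConst b γ * (∫⁻ y, m y ^ γ ∂μ) ^ (1 / q) := by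
        congr 2; simp only [γ]; field_simp; ring
    _ ≤ lqNorm q σ (pot G ν) :=
        mul_lintegral_rpow_le_lqNorm hq0 (by simp only [γ]; field_simp; ring) hμσ hm
          (mul_rpow_le_pot_withDensity hG hW μ hN hγ.le)
    _ ≤ kappa G q σ * ∫⁻ y, m y ^ γ ∂μ := hν ▸ lqNorm_pot_le_kappa_mul hq0 σ ν

end Kappa

section Exhaustion

variable {G : Ω → Ω → ℝ≥0∞} (σ : Measure Ω) [SigmaFinite σ]

omit [TopologicalSpace Ω] in
theorem tendsto_pot_restrict_spanningSets (x : Ω) :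
    Tendsto (fun n => pot G (σ.restrict (spanningSets σ n)) x) atTop (𝓝 (pot G σ x)) := by
  have hmono : Monotone fun n => pot G (σ.restrict (spanningSets σ n)) x := fun i j hij =>
    pot_mono (Measure.restrict_mono (monotone_spanningSets σ hij) le_rfl) x
  convert tendsto_atTop_iSup hmono
  simp only [pot]
  rw [← setLIntegral_iUnion_of_directed _ (monotone_spanningSets σ).directed_le,
    iUnion_spanningSets, Measure.restrict_univ]

omit [TopologicalSpace Ω] in
theorem lintegral_pot_rpow_le_of_forall_spanningSets
    (hGm : Measurable fun p : Ω × Ω => G p.1 p.2) {γ : ℝ} (hγ : 0 ≤ γ) {M : ℝ≥0∞}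
    (h : ∀ n : ℕ, ∫⁻ y, min (pot G (σ.restrict (spanningSets σ n)) y) n ^ γ
      ∂σ.restrict (spanningSets σ n) ≤ M) :
    ∫⁻ y, pot G σ y ^ γ ∂σ ≤ M := by
  set K := spanningSets σ
  set f : ℕ → Ω → ℝ≥0∞ := fun n =>
    (K n).indicator fun y => min (pot G (σ.restrict (K n)) y) n ^ γ
  have hf : ∀ n, Measurable (f n) := fun n =>
    ((hGm.lintegral_prod_right'.min measurable_const).pow_const γ).indicator
      (measurableSet_spanningSets σ n)
  have hmono : ∀ y, Monotone fun n => f n y := fun y i j hij =>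
    (indicator_le_indicator_of_subset (monotone_spanningSets σ hij) (fun _ => zero_le) y).trans
      (indicator_le_indicator (ENNReal.rpow_le_rpow (min_le_min
        (pot_mono (Measure.restrict_mono (monotone_spanningSets σ hij) le_rfl) y)
        (Nat.cast_le.2 hij)) hγ))
  have hlim : ∀ y, Tendsto (fun n => f n y) atTop (𝓝 (pot G σ y ^ γ)) := by
    intro y
    obtain ⟨n₀, hn₀⟩ : ∃ n, y ∈ K n := mem_iUnion.1 ((iUnion_spanningSets σ).symm ▸ mem_univ y)
    have hev : (fun n : ℕ => min (pot G (σ.restrict (K n)) y) n ^ γ) =ᶠ[atTop] fun n => f n y :=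
      eventually_atTop.2 ⟨n₀, fun n hn =>
        (indicator_of_mem (monotone_spanningSets σ hn hn₀) fun z => _).symm⟩
    have hmin :=
      (tendsto_pot_restrict_spanningSets (G := G) σ y).min ENNReal.tendsto_nat_nhds_top
    rw [min_top_right] at hmin
    exact ((ENNReal.continuous_rpow_const.tendsto _).comp hmin).congr' hev
  refine le_of_tendsto' (lintegral_tendsto_of_tendsto_of_monotone (fun n => (hf n).aemeasurable)
    (ae_of_all _ hmono) (ae_of_all _ hlim)) fun n => ?_
  rw [lintegral_indicator (measurableSet_spanningSets σ n)]
  exact h n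

end Exhaustion

theorem statement2_general [SecondCountableTopology Ω]
    [BorelSpace Ω] (G : Ω → Ω → ℝ≥0∞) (q b : ℝ) (hq0 : 0 < q) (hq1 : q < 1)
    (σ : Measure Ω) [IsLocallyFiniteMeasure σ] (hGk : IsKernel G) (hWMP : WMP G b) :
    ∃ C₁ : ℝ, 0 < C₁ ∧
      ENNReal.ofReal C₁ * lqNorm (q / (1 - q)) σ (pot G σ) ≤ kappa G q σ := by
  set γ := q / (1 - q)
  have hγ : 0 < γ := div_pos hq0 (sub_pos.2 hq1)
  set c := wmpConst b γ
  have hc0 : c ≠ 0 := wmpConst_ne_zero hγ.le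
  have hctop : c ≠ ∞ := wmpConst_ne_top (one_pos.trans_le hWMP.1) γ
  refine ⟨c.toReal, ENNReal.toReal_pos hc0 hctop, ?_⟩
  have hint : ∫⁻ y, pot G σ y ^ γ ∂σ ≤ (kappa G q σ / c) ^ γ :=
    lintegral_pot_rpow_le_of_forall_spanningSets σ hGk.measurable hγ.le fun n =>
      have := isFiniteMeasure_restrict.2 (measure_spanningSets_lt_top σ n).ne
      lintegral_min_pot_rpow_le hGk hWMP hq0 hq1 Measure.restrict_le_self
        (ENNReal.natCast_ne_top n)
  have hnorm : lqNorm γ σ (pot G σ) ≤ kappa G q σ / c := by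
    calc lqNorm γ σ (pot G σ) ≤ ((kappa G q σ / c) ^ γ) ^ (1 / γ) :=
          ENNReal.rpow_le_rpow hint (by positivity)
      _ = kappa G q σ / c := by
          rw [← ENNReal.rpow_mul, mul_one_div_cancel hγ.ne', ENNReal.rpow_one]
  rw [ENNReal.ofReal_toReal hctop]
  calc c * lqNorm γ σ (pot G σ) ≤ c * (kappa G q σ / c) := by gcongr
    _ ≤ kappa G q σ := ENNReal.mul_div_le

/-- For a kernel satisfying the weak maximum principle with constant `𝔟`,
`C₁ ‖Gσ‖_{L^{q/(1-q)}(σ)} ≤ ϰ` for some positive constant `C₁ = C₁(q,𝔟)`. -/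
theorem statement2 [LocallyCompactSpace Ω] [T2Space Ω] [SecondCountableTopology Ω]
    [BorelSpace Ω] (G : Ω → Ω → ℝ≥0∞) (q b : ℝ) (hq0 : 0 < q) (hq1 : q < 1)
    (σ : Measure Ω) [IsLocallyFiniteMeasure σ] (hGk : IsKernel G) (hWMP : WMP G b) :
    ∃ C₁ : ℝ, 0 < C₁ ∧
      ENNReal.ofReal C₁ * lqNorm (q / (1 - q)) σ (pot G σ) ≤ kappa G q σ :=
  statement2_general G q b hq0 hq1 σ hGk hWMP

end NPE
end
end

section
/- Let Ω be a locally compact Hausdorff space with countable base, 0 < q < 1, σ a locally finite Radon measure on Ω, and G a kernel on Ω satisfying the weak maximum principle with constant 𝔟. Let u be a nontrivial super-solution, i.e., u > 0 σ-a.e. and G(u^q dσ) ≤ u < +∞ σ-a.e. Then u(x) ≥ c (Gσ(x))^{1/(1−q)}, with c = (1−q)^{1/(1−q)} 𝔟^{−q/(1−q)}, at every x ∈ Ω such that G(u^q dσ)(x) ≤ u(x); in particular, this estimate holds σ-a.e. -/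
open MeasureTheory ENNReal Set

noncomputable section

/-!
Cut the measure `u^q dσ` at the level `t`: `ν_t = u^q 1_{u < t} dσ`. On the support of `ν_t`
the super-solution inequality gives `Gν_t ≤ G(u^q dσ) ≤ u < t`, so the weak maximum principle
yields `Gν_t ≤ 𝔟 t` everywhere, while trivially `Gν_t ≤ G(u^q dσ)`. Since
`u(y)^{-q} = ∫_{u(y)}^∞ q t^{-q-1} dt`, Tonelli gives `Gσ = ∫_0^∞ q t^{-q-1} Gν_t dt`. At a point
where `G(u^q dσ)(x) ≤ u(x)`, splitting this integral at `t = u(x)/𝔟` and using the first bound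
below and the second above gives `Gσ(x) ≤ 𝔟^q u(x)^{1-q} / (1-q)`, which is the claim.
-/

open Filter Topology
open scoped NNReal

namespace NPE

section Real

variable {q b U : ℝ}

lemma lintegral_Ioi_rpow_neg_sub_one (hq : 0 < q) {s : ℝ} (hs : 0 < s) :
    ∫⁻ t in Ioi s, ENNReal.ofReal (q * t ^ (-q - 1)) = ENNReal.ofReal (s ^ (-q)) := by
  have hlt : -q - 1 < -1 := by linarith
  rw [← ofReal_integral_eq_lintegral_ofReal
      ((integrableOn_Ioi_rpow_of_lt hlt hs).const_mul q)
      ((ae_restrict_mem measurableSet_Ioi).mono fun t ht =>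
        mul_nonneg hq.le (Real.rpow_nonneg (hs.trans ht).le _)),
    integral_const_mul, integral_Ioi_rpow_of_lt hlt hs]
  congr 1
  rw [show -q - 1 + 1 = -q by ring, neg_div_neg_eq, mul_div_cancel₀ _ hq.ne']

lemma lintegral_Ioc_rpow_neg (hq : q < 1) {T : ℝ} (hT : 0 ≤ T) :
    ∫⁻ t in Ioc 0 T, ENNReal.ofReal (t ^ (-q)) = ENNReal.ofReal (T ^ (1 - q) / (1 - q)) := by
  have hq' : -1 < -q := by linarith
  rw [← ofReal_integral_eq_lintegral_ofReal
      (intervalIntegral.intervalIntegrable_rpow' hq').1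
      ((ae_restrict_mem measurableSet_Ioc).mono fun t ht => Real.rpow_nonneg ht.1.le _),
    ← intervalIntegral.integral_of_le hT, integral_rpow (Or.inl hq'),
    Real.zero_rpow (by linarith), show -q + 1 = 1 - q by ring, sub_zero]

lemma lintegral_ofReal_lt_rpow_neg_sub_one (hq : 0 < q) {a : ℝ≥0∞} (ha0 : a ≠ 0)
    (ha : a ≠ ∞) :
    ∫⁻ t in {t : ℝ | a < ENNReal.ofReal t}, ENNReal.ofReal (q * t ^ (-q - 1)) = a ^ (-q) := by
  have hset : {t : ℝ | a < ENNReal.ofReal t} = Ioi a.toReal := by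
    ext t
    exact ENNReal.lt_ofReal_iff_toReal_lt ha
  rw [hset, lintegral_Ioi_rpow_neg_sub_one hq (ENNReal.toReal_pos ha0 ha),
    ← ENNReal.ofReal_rpow_of_pos (ENNReal.toReal_pos ha0 ha), ENNReal.ofReal_toReal ha]


/-- Split at `t = U / b`: below it use `F t ≤ b t`, above it `F t ≤ U`. -/
lemma lintegral_Ioi_rpow_mul_le_of_le_min (hq0 : 0 < q) (hq1 : q < 1) (hb : 0 < b)
    (hU : 0 ≤ U) {F : ℝ → ℝ≥0∞} (hlin : ∀ t, 0 < t → F t ≤ ENNReal.ofReal (b * t))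
    (hconst : ∀ t, F t ≤ ENNReal.ofReal U) :
    ∫⁻ t in Ioi 0, ENNReal.ofReal (q * t ^ (-q - 1)) * F t ≤
      ENNReal.ofReal (b ^ q * U ^ (1 - q) / (1 - q)) := by
  rcases hU.eq_or_lt with rfl | hUpos
  · have hF : ∀ t, F t = 0 := fun t => by simpa using hconst t
    simp [hF]
  set T := U / b
  have hT : 0 < T := div_pos hUpos hb
  have hUT : U = b * T := (mul_div_cancel₀ U hb.ne').symm
  have hbelow : ∀ t ∈ Ioc 0 T, ENNReal.ofReal (q * t ^ (-q - 1)) * F t ≤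
      ENNReal.ofReal (q * b) * ENNReal.ofReal (t ^ (-q)) := by
    rintro t ⟨ht, -⟩
    calc ENNReal.ofReal (q * t ^ (-q - 1)) * F t
        ≤ ENNReal.ofReal (q * t ^ (-q - 1)) * ENNReal.ofReal (b * t) := by gcongr; exact hlin t ht
      _ = ENNReal.ofReal (q * b) * ENNReal.ofReal (t ^ (-q)) := by
        rw [← ENNReal.ofReal_mul (by positivity), ← ENNReal.ofReal_mul (by positivity),
          Real.rpow_sub_one ht.ne']
        congr 1
        field_simp
  have hsum : q * b * (T ^ (1 - q) / (1 - q)) + T ^ (-q) * U = b ^ q * U ^ (1 - q) / (1 - q) := by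
    have hlow : T ^ (-q) * U = b * T ^ (1 - q) := by
      rw [hUT, sub_eq_neg_add, Real.rpow_add hT, Real.rpow_one]
      ring
    have hhigh : b ^ q * U ^ (1 - q) = b * T ^ (1 - q) := by
      rw [hUT, Real.mul_rpow hb.le hT.le, ← mul_assoc, ← Real.rpow_add hb, add_sub_cancel,
        Real.rpow_one]
    have : 1 - q ≠ 0 := by linarith
    rw [hlow, hhigh]
    field_simp
    ring
  calc ∫⁻ t in Ioi 0, ENNReal.ofReal (q * t ^ (-q - 1)) * F t
      = (∫⁻ t in Ioc 0 T, ENNReal.ofReal (q * t ^ (-q - 1)) * F t) +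
          ∫⁻ t in Ioi T, ENNReal.ofReal (q * t ^ (-q - 1)) * F t := by
        rw [← Ioc_union_Ioi_eq_Ioi hT.le,
          lintegral_union measurableSet_Ioi (Ioc_disjoint_Ioi le_rfl)]
    _ ≤ (∫⁻ t in Ioc 0 T, ENNReal.ofReal (q * b) * ENNReal.ofReal (t ^ (-q))) +
          ∫⁻ t in Ioi T, ENNReal.ofReal (q * t ^ (-q - 1)) * ENNReal.ofReal U :=
        add_le_add (setLIntegral_mono' measurableSet_Ioc hbelow)
          (lintegral_mono fun t => by gcongr; exact hconst t)
    _ = ENNReal.ofReal (b ^ q * U ^ (1 - q) / (1 - q)) := by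
        rw [lintegral_const_mul _ (by fun_prop), lintegral_Ioc_rpow_neg hq1 hT.le,
          lintegral_mul_const _ (by fun_prop), lintegral_Ioi_rpow_neg_sub_one hq0 hT,
          ← ENNReal.ofReal_mul (by positivity), ← ENNReal.ofReal_mul (by positivity),
          ← ENNReal.ofReal_add (by positivity) (by positivity), hsum]

lemma ofReal_mul_rpow_le_of_le (hq1 : q < 1) (hb : 0 < b) (hU : 0 ≤ U) {A : ℝ≥0∞}
    (hA : A ≤ ENNReal.ofReal (b ^ q * U ^ (1 - q) / (1 - q))) :
    ENNReal.ofReal ((1 - q) ^ ((1 : ℝ) / (1 - q)) * b ^ (-(q / (1 - q)))) *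
      A ^ ((1 : ℝ) / (1 - q)) ≤ ENNReal.ofReal U := by
  have hq : 0 < 1 - q := by linarith
  have hpow : (b ^ q * U ^ (1 - q) / (1 - q)) ^ ((1 : ℝ) / (1 - q)) =
      b ^ (q / (1 - q)) * U / (1 - q) ^ ((1 : ℝ) / (1 - q)) := by
    rw [Real.div_rpow (by positivity) hq.le, Real.mul_rpow (by positivity) (by positivity),
      ← Real.rpow_mul hb.le, ← Real.rpow_mul hU, mul_one_div, mul_one_div_cancel hq.ne',
      Real.rpow_one]
  calc ENNReal.ofReal ((1 - q) ^ ((1 : ℝ) / (1 - q)) * b ^ (-(q / (1 - q)))) *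
        A ^ ((1 : ℝ) / (1 - q))
      ≤ ENNReal.ofReal ((1 - q) ^ ((1 : ℝ) / (1 - q)) * b ^ (-(q / (1 - q)))) *
        ENNReal.ofReal (b ^ q * U ^ (1 - q) / (1 - q)) ^ ((1 : ℝ) / (1 - q)) := by
        gcongr
    _ = ENNReal.ofReal U := by
        rw [ENNReal.ofReal_rpow_of_nonneg (by positivity) (by positivity),
          ← ENNReal.ofReal_mul (by positivity), hpow, Real.rpow_neg hb.le]
        congr 1
        have : 0 < b ^ (q / (1 - q)) := by positivity
        have : 0 < (1 - q) ^ ((1 : ℝ) / (1 - q)) := by positivity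
        field_simp

end Real

variable {Ω : Type*} [MeasurableSpace Ω]

lemma pot_smul (G : Ω → Ω → ℝ≥0∞) (c : ℝ≥0) (μ : Measure Ω) (x : Ω) :
    pot G (c • μ) x = c * pot G μ x :=
  lintegral_smul_measure c _

section Truncation

variable (σ : Measure Ω) (u : Ω → ℝ≥0∞) (q : ℝ)

def truncMeasure (t : ℝ) : Measure Ω :=
  (σ.restrict {y | u y < ENNReal.ofReal t}).withDensity fun y => u y ^ q

variable {σ u q}

lemma truncMeasure_le_smul (hu : Measurable u) (hq : 0 ≤ q) (t : ℝ) :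
    truncMeasure σ u q t ≤ (t.toNNReal ^ q) • σ := by
  set S := {y | u y < ENNReal.ofReal t}
  have hdens : (fun y => u y ^ q) ≤ᵐ[σ.restrict S] fun _ => ((t.toNNReal ^ q : ℝ≥0) : ℝ≥0∞) := by
    filter_upwards [ae_restrict_mem (measurableSet_lt hu measurable_const)] with y hy
    rw [ENNReal.coe_rpow_of_nonneg _ hq]
    exact ENNReal.rpow_le_rpow hy.le hq
  calc truncMeasure σ u q t
      ≤ (σ.restrict S).withDensity fun _ => ((t.toNNReal ^ q : ℝ≥0) : ℝ≥0∞) :=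
        withDensity_mono hdens
    _ = ((t.toNNReal ^ q) • σ).restrict S := by
        rw [withDensity_const, Measure.restrict_smul, ENNReal.smul_def]
    _ ≤ (t.toNNReal ^ q) • σ := Measure.restrict_le_self

lemma isLocallyFiniteMeasure_truncMeasure [TopologicalSpace Ω] [IsLocallyFiniteMeasure σ]
    (hu : Measurable u) (hq : 0 ≤ q) (t : ℝ) : IsLocallyFiniteMeasure (truncMeasure σ u q t) :=
  Measure.isLocallyFiniteMeasure_of_le (truncMeasure_le_smul hu hq t)

lemma truncMeasure_absolutelyContinuous (t : ℝ) : truncMeasure σ u q t ≪ σ :=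
  (withDensity_absolutelyContinuous _ _).trans Measure.restrict_le_self.absolutelyContinuous

lemma ae_truncMeasure_lt (hu : Measurable u) (t : ℝ) :
    ∀ᵐ y ∂truncMeasure σ u q t, u y < ENNReal.ofReal t :=
  (withDensity_absolutelyContinuous _ _).ae_le
    (ae_restrict_mem (measurableSet_lt hu measurable_const))

lemma pot_truncMeasure {G : Ω → Ω → ℝ≥0∞} (hu : Measurable u) (hG : ∀ x, Measurable (G x))
    (t : ℝ) (x : Ω) :
    pot G (truncMeasure σ u q t) x = ∫⁻ y in {y | u y < ENNReal.ofReal t}, G x y * u y ^ q ∂σ := by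
  rw [pot, truncMeasure, lintegral_withDensity_eq_lintegral_mul _ (hu.pow_const q) (hG x)]
  simp only [Pi.mul_apply, mul_comm]

lemma pot_truncMeasure_le_potF {G : Ω → Ω → ℝ≥0∞} (hu : Measurable u)
    (hG : ∀ x, Measurable (G x)) (t : ℝ) (x : Ω) :
    pot G (truncMeasure σ u q t) x ≤ potF G σ (fun y => u y ^ q) x := by
  rw [pot_truncMeasure hu hG]
  exact setLIntegral_le_lintegral _ _

end Truncation

section LayerCake

variable {q : ℝ} {σ : Measure Ω} [SFinite σ]

/-- Layer-cake formula with the weight `u^q`: `u(y)^{-q} = ∫_{u(y)}^∞ q t^{-q-1} dt` and Tonelli. -/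
lemma lintegral_eq_lintegral_Ioi_rpow_mul_setLIntegral_lt (hq : 0 < q) {u g : Ω → ℝ≥0∞}
    (hu : Measurable u) (hg : Measurable g) (hpos : ∀ᵐ y ∂σ, 0 < u y)
    (hfin : ∀ᵐ y ∂σ, u y < ∞) :
    ∫⁻ y, g y ∂σ = ∫⁻ t in Ioi 0, ENNReal.ofReal (q * t ^ (-q - 1)) *
      ∫⁻ y in {y | u y < ENNReal.ofReal t}, g y * u y ^ q ∂σ := by
  have hw : Measurable fun t : ℝ => ENNReal.ofReal (q * t ^ (-q - 1)) := by fun_prop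
  set L : Set (ℝ × Ω) := {p | u p.2 < ENNReal.ofReal p.1}
  have hinner : ∀ t : ℝ, ENNReal.ofReal (q * t ^ (-q - 1)) *
      ∫⁻ y in {y | u y < ENNReal.ofReal t}, g y * u y ^ q ∂σ =
      ∫⁻ y, L.indicator (fun p => ENNReal.ofReal (q * p.1 ^ (-q - 1)) * (g p.2 * u p.2 ^ q))
        (t, y) ∂σ := by
    intro t
    rw [← lintegral_indicator (measurableSet_lt hu measurable_const),
      ← lintegral_const_mul' _ _ ENNReal.ofReal_ne_top]
    congr 1 with y
    by_cases h : u y < ENNReal.ofReal t <;> simp [L, h]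
  simp_rw [hinner]
  have hmeas : Measurable (L.indicator fun p : ℝ × Ω =>
      ENNReal.ofReal (q * p.1 ^ (-q - 1)) * (g p.2 * u p.2 ^ q)) :=
    Measurable.indicator (by fun_prop) (measurableSet_lt (hu.comp measurable_snd) (by fun_prop))
  rw [lintegral_lintegral_swap (f := fun t y => L.indicator
    (fun p => ENNReal.ofReal (q * p.1 ^ (-q - 1)) * (g p.2 * u p.2 ^ q)) (t, y))
    hmeas.aemeasurable]
  refine lintegral_congr_ae ?_
  filter_upwards [hpos, hfin] with y hy0 hyfin
  have hlevel : MeasurableSet {t : ℝ | u y < ENNReal.ofReal t} :=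
    measurableSet_lt measurable_const (by fun_prop)
  have hslice : ∀ t : ℝ,
      L.indicator (fun p => ENNReal.ofReal (q * p.1 ^ (-q - 1)) * (g p.2 * u p.2 ^ q)) (t, y) =
      {t : ℝ | u y < ENNReal.ofReal t}.indicator
        (fun t => ENNReal.ofReal (q * t ^ (-q - 1))) t * (g y * u y ^ q) := by
    intro t
    by_cases h : u y < ENNReal.ofReal t <;> simp [L, h]
  have hlevel_sub : {t : ℝ | u y < ENNReal.ofReal t} ⊆ Ioi 0 := fun t ht =>
    ENNReal.ofReal_pos.1 (pos_of_gt ht)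
  simp_rw [hslice]
  rw [lintegral_mul_const _ (hw.indicator hlevel), lintegral_indicator hlevel,
    Measure.restrict_restrict hlevel, inter_eq_left.2 hlevel_sub,
    lintegral_ofReal_lt_rpow_neg_sub_one hq hy0.ne' hyfin.ne, ← mul_assoc, mul_comm _ (g y),
    mul_assoc, ← ENNReal.rpow_add _ _ hy0.ne' hyfin.ne, neg_add_cancel, ENNReal.rpow_zero,
    mul_one]

end LayerCake

section Topology

variable [TopologicalSpace Ω]

lemma LowerSemicontinuous.le_of_ae_le_of_mem_msupp {α : Type*} [LinearOrder α]
    {f : Ω → α} (hf : LowerSemicontinuous f) {μ : Measure Ω} {c : α}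
    (hae : ∀ᵐ z ∂μ, f z ≤ c) {x : Ω} (hx : x ∈ msupp μ) : f x ≤ c := by
  by_contra! hlt
  obtain ⟨U, hU, hUopen, hxU⟩ := eventually_nhds_iff.1 (hf x c hlt)
  exact (hx U hUopen hxU).ne'
    (measure_mono_null (fun z hz => not_le.2 (hU z hz)) (ae_iff.1 hae))

lemma msupp_smul_subset (c : ℝ≥0) (μ : Measure Ω) : msupp (c • μ) ⊆ msupp μ := by
  intro x hx U hU hxU
  refine pos_of_ne_zero fun h => (hx U hU hxU).ne' ?_
  rw [Measure.smul_apply, h, smul_zero]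

section Kernel

variable [SecondCountableTopology Ω] [OpensMeasurableSpace Ω] {G : Ω → Ω → ℝ≥0∞}

lemma IsKernel.measurable_apply (hGk : IsKernel G) (x : Ω) : Measurable (G x) :=
  hGk.measurable.comp (measurable_const.prodMk measurable_id)

lemma IsKernel.lowerSemicontinuous_pot (hGk : IsKernel G) (μ : Measure Ω) :
    LowerSemicontinuous (pot G μ) := by
  refine lowerSemicontinuous_iff_le_liminf.2 fun x => ?_
  calc pot G μ x ≤ ∫⁻ y, liminf (fun x' => G x' y) (𝓝 x) ∂μ :=
        lintegral_mono fun y =>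
          LowerSemicontinuous.le_liminf (hGk.comp (continuous_id.prodMk continuous_const)) x
    _ ≤ liminf (pot G μ) (𝓝 x) := lintegral_liminf_le hGk.measurable_apply

/-- Lower semicontinuity of `Gμ` turns the `μ`-a.e. bound into a bound on the support of `μ`;
then apply the weak maximum principle to `c⁻¹ • μ`. -/
lemma WMP.pot_le_of_ae_pot_le {b : ℝ} (hWMP : WMP G b) (hGk : IsKernel G)
    (μ : Measure Ω) [IsLocallyFiniteMeasure μ] {c : ℝ≥0} (hc : c ≠ 0)
    (hae : ∀ᵐ z ∂μ, pot G μ z ≤ c) (x : Ω) : pot G μ x ≤ c * ENNReal.ofReal b := by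
  have hc' : (c : ℝ≥0∞) ≠ 0 := ENNReal.coe_ne_zero.2 hc
  have hsupp : ∀ z ∈ msupp (c⁻¹ • μ), pot G (c⁻¹ • μ) z ≤ 1 := by
    intro z hz
    rw [pot_smul, ENNReal.coe_inv hc, ← ENNReal.div_eq_inv_mul,
      ENNReal.div_le_iff hc' ENNReal.coe_ne_top, one_mul]
    exact LowerSemicontinuous.le_of_ae_le_of_mem_msupp (hGk.lowerSemicontinuous_pot μ) hae
      (msupp_smul_subset _ _ hz)
  have h := hWMP.2 (c⁻¹ • μ) inferInstance hsupp x
  rwa [pot_smul, ENNReal.coe_inv hc, ← ENNReal.div_eq_inv_mul,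
    ENNReal.div_le_iff hc' ENNReal.coe_ne_top, mul_comm] at h

section Supersolution

variable {σ : Measure Ω} [IsLocallyFiniteMeasure σ] {q b : ℝ} {u : Ω → ℝ≥0∞}

lemma pot_truncMeasure_le_mul (hWMP : WMP G b) (hGk : IsKernel G) (hu : Measurable u)
    (hq : 0 ≤ q) (hsup : ∀ᵐ y ∂σ, potF G σ (fun y => u y ^ q) y ≤ u y) {t : ℝ} (ht : 0 < t)
    (x : Ω) : pot G (truncMeasure σ u q t) x ≤ ENNReal.ofReal (b * t) := by
  have := isLocallyFiniteMeasure_truncMeasure (σ := σ) hu hq t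
  have hae : ∀ᵐ z ∂truncMeasure σ u q t, pot G (truncMeasure σ u q t) z ≤ t.toNNReal := by
    filter_upwards [(truncMeasure_absolutelyContinuous t).ae_le hsup, ae_truncMeasure_lt hu t]
      with z hz hzt
    exact (pot_truncMeasure_le_potF hu hGk.measurable_apply t z).trans (hz.trans hzt.le)
  calc pot G (truncMeasure σ u q t) x ≤ t.toNNReal * ENNReal.ofReal b :=
        hWMP.pot_le_of_ae_pot_le hGk _ (by simpa using ht) hae x
    _ = ENNReal.ofReal (b * t) := by
        rw [ENNReal.ofReal_mul (zero_le_one.trans hWMP.1), mul_comm]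
        rfl

lemma pot_le_of_potF_le (hWMP : WMP G b) (hGk : IsKernel G) (hq0 : 0 < q) (hq1 : q < 1)
    (hu : Measurable u) (hpos : ∀ᵐ y ∂σ, 0 < u y)
    (hsup : ∀ᵐ y ∂σ, potF G σ (fun y => u y ^ q) y ≤ u y) (hfin : ∀ᵐ y ∂σ, u y < ∞) {x : Ω}
    (hx : potF G σ (fun y => u y ^ q) x ≤ u x) (hxfin : u x ≠ ∞) :
    pot G σ x ≤ ENNReal.ofReal (b ^ q * (u x).toReal ^ (1 - q) / (1 - q)) := by
  rw [pot, lintegral_eq_lintegral_Ioi_rpow_mul_setLIntegral_lt hq0 hu (hGk.measurable_apply x)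
    hpos hfin]
  simp_rw [← pot_truncMeasure hu hGk.measurable_apply]
  exact lintegral_Ioi_rpow_mul_le_of_le_min hq0 hq1 (zero_lt_one.trans_le hWMP.1)
    ENNReal.toReal_nonneg (fun t ht => pot_truncMeasure_le_mul hWMP hGk hu hq0.le hsup ht x)
    fun t => (pot_truncMeasure_le_potF hu hGk.measurable_apply t x).trans
      (hx.trans (ENNReal.ofReal_toReal hxfin).ge)

lemma ofReal_mul_pot_rpow_le_of_potF_le (hWMP : WMP G b) (hGk : IsKernel G) (hq0 : 0 < q)
    (hq1 : q < 1) (hu : Measurable u) (hpos : ∀ᵐ y ∂σ, 0 < u y)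
    (hsup : ∀ᵐ y ∂σ, potF G σ (fun y => u y ^ q) y ≤ u y) (hfin : ∀ᵐ y ∂σ, u y < ∞) {x : Ω}
    (hx : potF G σ (fun y => u y ^ q) x ≤ u x) :
    ENNReal.ofReal ((1 - q) ^ ((1 : ℝ) / (1 - q)) * b ^ (-(q / (1 - q)))) *
      pot G σ x ^ ((1 : ℝ) / (1 - q)) ≤ u x := by
  rcases eq_or_ne (u x) ∞ with htop | hxfin
  · simp [htop]
  rw [← ENNReal.ofReal_toReal hxfin]
  exact ofReal_mul_rpow_le_of_le hq1 (zero_lt_one.trans_le hWMP.1) ENNReal.toReal_nonneg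
    (pot_le_of_potF_le hWMP hGk hq0 hq1 hu hpos hsup hfin hx hxfin)

end Supersolution

end Kernel

end Topology

end NPE

namespace NPE

variable {Ω : Type*} [TopologicalSpace Ω] [MeasurableSpace Ω]

theorem statement9_general [SecondCountableTopology Ω]
    [BorelSpace Ω] (G : Ω → Ω → ℝ≥0∞) (q b : ℝ) (hq0 : 0 < q) (hq1 : q < 1)
    (σ : Measure Ω) [IsLocallyFiniteMeasure σ] (hGk : IsKernel G) (hWMP : WMP G b)
    (u : Ω → ℝ≥0∞) (hu : Measurable u) (hupos : ∀ᵐ x ∂σ, 0 < u x)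
    (husup : ∀ᵐ x ∂σ, potF G σ (fun y => u y ^ q) x ≤ u x ∧ u x < ∞) :
    (∀ x : Ω, potF G σ (fun y => u y ^ q) x ≤ u x →
      ENNReal.ofReal ((1 - q) ^ ((1 : ℝ) / (1 - q)) * b ^ (-(q / (1 - q)))) *
          pot G σ x ^ ((1 : ℝ) / (1 - q)) ≤ u x) ∧
    ∀ᵐ x ∂σ,
      ENNReal.ofReal ((1 - q) ^ ((1 : ℝ) / (1 - q)) * b ^ (-(q / (1 - q)))) *
          pot G σ x ^ ((1 : ℝ) / (1 - q)) ≤ u x := by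
  have hbound := fun x (hx : potF G σ (fun y => u y ^ q) x ≤ u x) =>
    ofReal_mul_pot_rpow_le_of_potF_le hWMP hGk hq0 hq1 hu hupos (husup.mono fun _ h => h.1)
      (husup.mono fun _ h => h.2) hx
  exact ⟨hbound, husup.mono fun x hx => hbound x hx.1⟩

/-- lower bound `u ≥ c (Gσ)^{1/(1-q)}`, with
`c = (1-q)^{1/(1-q)} 𝔟^{-q/(1-q)}`, for nontrivial super-solutions, for a kernel obeying
the weak maximum principle. -/
theorem statement9 [LocallyCompactSpace Ω] [T2Space Ω] [SecondCountableTopology Ω]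
    [BorelSpace Ω] (G : Ω → Ω → ℝ≥0∞) (q b : ℝ) (hq0 : 0 < q) (hq1 : q < 1)
    (σ : Measure Ω) [IsLocallyFiniteMeasure σ] (hGk : IsKernel G) (hWMP : WMP G b)
    (u : Ω → ℝ≥0∞) (hu : Measurable u) (hupos : ∀ᵐ x ∂σ, 0 < u x)
    (husup : ∀ᵐ x ∂σ, potF G σ (fun y => u y ^ q) x ≤ u x ∧ u x < ∞) :
    (∀ x : Ω, potF G σ (fun y => u y ^ q) x ≤ u x →
      ENNReal.ofReal ((1 - q) ^ ((1 : ℝ) / (1 - q)) * b ^ (-(q / (1 - q)))) *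
          pot G σ x ^ ((1 : ℝ) / (1 - q)) ≤ u x) ∧
    ∀ᵐ x ∂σ,
      ENNReal.ofReal ((1 - q) ^ ((1 : ℝ) / (1 - q)) * b ^ (-(q / (1 - q)))) *
          pot G σ x ^ ((1 : ℝ) / (1 - q)) ≤ u x :=
  statement9_general G q b hq0 hq1 σ hGk hWMP u hu hupos husup

end NPE
end
end

section
/- Let Ω be a set and d : Ω × Ω → (0, +∞] a symmetric function satisfying the quasi-triangle inequality d(x,y) ≤ κ[d(x,z) + d(z,y)] for all x,y,z ∈ Ω, with constant κ ≥ 1/2. Then Ptolemy's inequality holds: for all x₀, x, y, z ∈ Ω, d(x,y)·d(x₀,z) ≤ 4κ²[d(x,z)·d(y,x₀) + d(x₀,x)·d(z,y)]. -/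
open MeasureTheory ENNReal Set

noncomputable section

namespace NPE

variable {Ω : Type*} [TopologicalSpace Ω] [MeasurableSpace Ω]

/-! Going through either of the two other points, the quasi-triangle inequality bounds each
diagonal, `d x y` and `d x₀ z`, by `2κ` times the longer of two sides of the quadrilateral; so each
diagonal is at most `2κ` times a minimum of two maxima. The product of these two min-max
expressions is at most `max (d x z * d y x₀) (d x₀ x * d z y)`, by a case analysis on the
relative order of the four sides. -/

theorem min_max_mul_min_max_le_max_mul {α : Type*} [CommMonoid α] [LinearOrder α]
    [IsOrderedMonoid α] (a b c e : α) :
    min (max a b) (max c e) * min (max c a) (max e b) ≤ max (a * e) (c * b) := by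
  -- the statement is invariant under `(a, b, c, e) ↦ (b, a, e, c)`
  wlog hab : a ≤ b generalizing a b c e
  · simpa only [max_comm, min_comm, mul_comm] using this b a e c (le_of_not_ge hab)
  rcases le_total a c with hac | hca
  · calc _ ≤ max a b * max c a := mul_le_mul' (min_le_left _ _) (min_le_left _ _)
      _ = c * b := by rw [max_eq_right hab, max_eq_left hac, mul_comm]
      _ ≤ _ := le_max_right _ _
  rcases le_total c e with hce | hec
  · calc _ ≤ max c e * max c a := mul_le_mul' (min_le_right _ _) (min_le_left _ _)
      _ = a * e := by rw [max_eq_right hce, max_eq_right hca, mul_comm]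
      _ ≤ _ := le_max_left _ _
  · calc _ ≤ max c e * max e b := mul_le_mul' (min_le_right _ _) (min_le_right _ _)
      _ = c * b := by rw [max_eq_left hec, max_eq_right (hec.trans (hca.trans hab))]
      _ ≤ _ := le_max_right _ _

theorem ofReal_mul_add_le_ofReal_two_mul_mul_max (κ : ℝ) (s t : ℝ≥0∞) :
    ENNReal.ofReal κ * (s + t) ≤ ENNReal.ofReal (2 * κ) * max s t := by
  calc ENNReal.ofReal κ * (s + t) ≤ ENNReal.ofReal κ * (max s t + max s t) := by
        gcongr
        exacts [le_max_left s t, le_max_right s t]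
    _ = ENNReal.ofReal (2 * κ) * max s t := by
        rw [ENNReal.ofReal_mul zero_le_two, ENNReal.ofReal_ofNat]; ring

theorem statement17_general {X : Type*} (d : X → X → ℝ≥0∞) (κ : ℝ)
    (hκ : (1 / 2 : ℝ) ≤ κ) (hsymm : ∀ x y, d x y = d y x)
    (htri : ∀ x y z, d x y ≤ ENNReal.ofReal κ * (d x z + d z y)) :
    ∀ x₀ x y z : X, d x y * d x₀ z ≤
      ENNReal.ofReal (4 * κ ^ 2) * (d x z * d y x₀ + d x₀ x * d z y) := by
  intro x₀ x y z
  set k := ENNReal.ofReal (2 * κ)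
  have hmax (u v w : X) : d u v ≤ k * max (d u w) (d w v) :=
    (htri u v w).trans (ofReal_mul_add_le_ofReal_two_mul_mul_max κ _ _)
  have hxy : d x y ≤ k * min (max (d x z) (d z y)) (max (d x₀ x) (d y x₀)) := by
    rw [mul_min]
    refine le_min (hmax x y z) ?_
    simpa only [hsymm x x₀, hsymm x₀ y] using hmax x y x₀
  have hx₀z : d x₀ z ≤ k * min (max (d x₀ x) (d x z)) (max (d y x₀) (d z y)) := by
    rw [mul_min]
    refine le_min (hmax x₀ z x) ?_
    simpa only [hsymm x₀ y, hsymm y z] using hmax x₀ z y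
  have hk : k * k = ENNReal.ofReal (4 * κ ^ 2) := by
    rw [← ENNReal.ofReal_mul (by linarith)]; ring_nf
  calc d x y * d x₀ z ≤ k * min (max (d x z) (d z y)) (max (d x₀ x) (d y x₀)) *
        (k * min (max (d x₀ x) (d x z)) (max (d y x₀) (d z y))) := mul_le_mul' hxy hx₀z
    _ = k * k * (min (max (d x z) (d z y)) (max (d x₀ x) (d y x₀)) *
        min (max (d x₀ x) (d x z)) (max (d y x₀) (d z y))) := by ring
    _ ≤ k * k * max (d x z * d y x₀) (d x₀ x * d z y) := by
        gcongr; exact min_max_mul_min_max_le_max_mul _ _ _ _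
    _ ≤ ENNReal.ofReal (4 * κ ^ 2) * (d x z * d y x₀ + d x₀ x * d z y) := by
        rw [hk]; gcongr; exact max_le le_self_add le_add_self

/-- Ptolemy's inequality for quasi-metrics. -/
theorem statement17 {X : Type*} [Nonempty X] (d : X → X → ℝ≥0∞) (κ : ℝ)
    (hκ : (1 / 2 : ℝ) ≤ κ) (hpos : ∀ x y, 0 < d x y) (hsymm : ∀ x y, d x y = d y x)
    (htri : ∀ x y z, d x y ≤ ENNReal.ofReal κ * (d x z + d z y)) :
    ∀ x₀ x y z : X, d x y * d x₀ z ≤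
      ENNReal.ofReal (4 * κ ^ 2) * (d x z * d y x₀ + d x₀ x * d z y) :=
  statement17_general d κ hκ hsymm htri

end NPE
end
end
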